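/- Let G be a cycle graph with metric length function l, and let φ : (G,l) → (T,l_T) be a non-degenerate harmonic morphism of degree 3 to a metric tree T. Then there do not exist three distinct vertices x₁, x₂, x₃ of G such that the local multiplicity m_φ(xᵢ) equals 3 for each i = 1,2,3. -/
import Mathlib


/-- A (multi)graph with a metric length on each edge. -/
structure MGraph where
  V : Type
  E : Type
  [fintV : Fintype V]
  [fintE : Fintype E]
  [decV : DecidableEq V]
  [decE : DecidableEq E]
  src : E → V
  tgt : E → V
  len : E → ℝ
  len_pos : ∀ e, 0 < len e

attribute [instance] MGraph.fintV MGraph.fintE MGraph.decV MGraph.decE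

namespace MGraph

variable (G : MGraph)

/-- The darts (oriented edges) based at a vertex `x`. -/
def dartAt (x : G.V) : Finset (G.E × Bool) :=
  Finset.univ.filter fun d => cond d.2 (G.src d.1) (G.tgt d.1) = x

/-- The valence of a vertex (loops counted twice). -/
def valence (x : G.V) : ℕ := (G.dartAt x).card

/-- An edge is incident to a vertex. -/
def Inc (e : G.E) (v : G.V) : Prop := G.src e = v ∨ G.tgt e = v

/-- Adjacency of vertices. -/
def Adj (a b : G.V) : Prop :=
  ∃ e, (G.src e = a ∧ G.tgt e = b) ∨ (G.src e = b ∧ G.tgt e = a)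

/-- The graph is connected. -/
def Conn : Prop := ∀ a b : G.V, Relation.ReflTransGen G.Adj a b

/-- Adjacency avoiding a set of forbidden edges. -/
def AdjOff (F : Set G.E) (a b : G.V) : Prop :=
  ∃ e, e ∉ F ∧ ((G.src e = a ∧ G.tgt e = b) ∨ (G.src e = b ∧ G.tgt e = a))

/-- Connectivity after removing a set of edges. -/
def ConnOff (F : Set G.E) : Prop := ∀ a b : G.V, Relation.ReflTransGen (G.AdjOff F) a b

/-- A (metric) tree: connected with `|E| + 1 = |V|`. -/
def IsTree : Prop := G.Conn ∧ Fintype.card G.E + 1 = Fintype.card G.V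

/-- A cycle graph: connected and every vertex of valence `2`. -/
def IsCycleGraph : Prop := G.Conn ∧ ∀ x : G.V, G.valence x = 2

/-- A separating vertex: either a loop is attached at it, or it is a cut vertex. -/
def SeparatingVertex (v : G.V) : Prop :=
  (∃ e, G.src e = v ∧ G.tgt e = v) ∨
  ∃ a b : G.V, a ≠ v ∧ b ≠ v ∧
    ¬ Relation.ReflTransGen (fun x y => x ≠ v ∧ y ≠ v ∧ G.Adj x y) a b

/-- A pair of parallel (multiple) edges. -/
def HasParallelEdges : Prop :=
  ∃ e₁ e₂ : G.E, e₁ ≠ e₂ ∧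
    ((G.src e₁ = G.src e₂ ∧ G.tgt e₁ = G.tgt e₂) ∨
     (G.src e₁ = G.tgt e₂ ∧ G.tgt e₁ = G.src e₂))

end MGraph

/-- A morphism of metric graphs: vertices go to vertices, edges go to edges or
are contracted to vertices, every non-contracted edge carries a positive
integer index dilating its length. -/
structure MGraphMorphism (G T : MGraph) where
  vmap : G.V → T.V
  emap : G.E → T.E ⊕ T.V
  idx : G.E → ℕ
  idx_edge : ∀ e e', emap e = Sum.inl e' → 0 < idx e ∧ T.len e' = (idx e : ℝ) * G.len e
  idx_vert : ∀ e v, emap e = Sum.inr v → idx e = 0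
  ends_edge : ∀ e e', emap e = Sum.inl e' →
    (vmap (G.src e) = T.src e' ∧ vmap (G.tgt e) = T.tgt e') ∨
    (vmap (G.src e) = T.tgt e' ∧ vmap (G.tgt e) = T.src e')
  ends_vert : ∀ e v, emap e = Sum.inr v → vmap (G.src e) = v ∧ vmap (G.tgt e) = v

variable {G T : MGraph}

/-- The sum of the indices of the darts at `x` lying over a fixed edge `e'` of the target. -/
def localSum (φ : MGraphMorphism G T) (x : G.V) (e' : T.E) : ℕ :=
  ∑ d ∈ G.dartAt x, if φ.emap d.1 = Sum.inl e' then φ.idx d.1 else 0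

/-- Harmonicity: the local sums at `x` agree over all edges incident to `φ(x)`. -/
def Harmonic (φ : MGraphMorphism G T) : Prop :=
  ∀ (x : G.V) (e₁ e₂ : T.E), T.Inc e₁ (φ.vmap x) → T.Inc e₂ (φ.vmap x) →
    localSum φ x e₁ = localSum φ x e₂

/-- The local multiplicity `m_φ(x) = m`. -/
def HasMult (φ : MGraphMorphism G T) (x : G.V) (m : ℕ) : Prop :=
  (∃ e', T.Inc e' (φ.vmap x)) ∧
  ∀ e', T.Inc e' (φ.vmap x) → localSum φ x e' = m

/-- The total index over an edge `e'` of the target. -/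
def fiberDeg (φ : MGraphMorphism G T) (e' : T.E) : ℕ :=
  ∑ e ∈ Finset.univ.filter (fun e => φ.emap e = Sum.inl e'), φ.idx e

/-- The morphism has (constant) degree `d`. -/
def HasDegree (φ : MGraphMorphism G T) (d : ℕ) : Prop :=
  ∀ e' : T.E, fiberDeg φ e' = d

/-- Non-degeneracy: every vertex has an incident edge of positive index. -/
def NonDegenerate (φ : MGraphMorphism G T) : Prop :=
  ∀ x : G.V, ∃ d ∈ G.dartAt x, 0 < φ.idx d.1

/-- A tropical modification of a metric graph `Γ`: a metric graph `tot`
containing `Γ` such that every added edge is a bridge (the added parts are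
glued trees). -/
structure TropModC (Γ : MGraph) where
  tot : MGraph
  jV : Γ.V → tot.V
  jE : Γ.E → tot.E
  injV : Function.Injective jV
  injE : Function.Injective jE
  src_comm : ∀ e, tot.src (jE e) = jV (Γ.src e)
  tgt_comm : ∀ e, tot.tgt (jE e) = jV (Γ.tgt e)
  len_comm : ∀ e, tot.len (jE e) = Γ.len e
  added_bridges : ∀ e' : tot.E, (∀ e, jE e ≠ e') → ¬ tot.ConnOff {e'}

open Finset

namespace CycleAux

abbrev F2 := ZMod 2

/-- vertex indicator -/
def χ {α : Type} [DecidableEq α] (a : α) : α → F2 := fun b => if a = b then 1 else 0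

variable {G T : MGraph}

lemma mem_dartAt {d : G.E × Bool} {x : G.V} :
    d ∈ G.dartAt x ↔ cond d.2 (G.src d.1) (G.tgt d.1) = x := by
  simp [MGraph.dartAt]

lemma sum_dartAt {M : Type} [AddCommMonoid M] (G : MGraph) (f : G.E × Bool → M) :
    ∑ x, ∑ d ∈ G.dartAt x, f d = ∑ d, f d := by
  simpa [MGraph.dartAt] using
    Finset.sum_fiberwise_of_maps_to
      (g := fun d : G.E × Bool => cond d.2 (G.src d.1) (G.tgt d.1))
      (fun i _ => Finset.mem_univ _) f

/-- the boundary map over F2 -/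
def bdry (T : MGraph) : (T.E → F2) →ₗ[F2] (T.V → F2) where
  toFun c := fun v => ∑ e, c e * (χ (T.src e) v + χ (T.tgt e) v)
  map_add' c d := by
    funext v
    simp [add_mul, Finset.sum_add_distrib]
  map_smul' r c := by
    funext v
    simp [Finset.mul_sum, mul_assoc]

/-- edge indicator -/
def ed (T : MGraph) (e₀ : T.E) : T.E → F2 := fun e => if e = e₀ then 1 else 0

lemma bdry_ed (e₀ : T.E) : bdry T (ed T e₀) = χ (T.src e₀) + χ (T.tgt e₀) := by
  funext v
  simp only [bdry, ed, LinearMap.coe_mk, AddHom.coe_mk, ite_mul, one_mul, zero_mul,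
    Finset.sum_ite_eq', Finset.mem_univ, if_true, Pi.add_apply]

lemma chi_add_self (a : T.V) : (χ a + χ a : T.V → F2) = 0 := by
  funext v
  exact CharTwo.add_self_eq_zero _

lemma reach_mem_range (hconn : T.Conn) (a b : T.V) :
    (χ a + χ b : T.V → F2) ∈ LinearMap.range (bdry T) := by
  induction hconn a b with
  | refl => rw [chi_add_self]; exact zero_mem _
  | @tail b c hab hbc ih =>
      obtain ⟨e, he⟩ := hbc
      have hrange : (χ b + χ c : T.V → F2) ∈ LinearMap.range (bdry T) := by
        rcases he with ⟨h1, h2⟩ | ⟨h1, h2⟩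
        · exact ⟨ed T e, by rw [bdry_ed, h1, h2]⟩
        · exact ⟨ed T e, by rw [bdry_ed, h1, h2, add_comm]⟩
      have key : (χ a + χ c : T.V → F2) = (χ a + χ b) + (χ b + χ c) := by
        funext v
        have h2 := CharTwo.add_self_eq_zero (χ b v)
        simp only [Pi.add_apply]
        linear_combination -h2
      rw [key]
      exact add_mem ih hrange

lemma tree_bdry_inj (hT : T.IsTree) : Function.Injective (bdry T) := by
  haveI : Fact (Nat.Prime 2) := ⟨Nat.prime_two⟩
  have hcard := hT.2
  have hV : 0 < Fintype.card T.V := by omega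
  obtain ⟨a₀⟩ : Nonempty T.V := Fintype.card_pos_iff.mp hV
  set fam : {b : T.V // b ≠ a₀} → (T.V → F2) := fun b => χ a₀ + χ (b : T.V) with hfam
  have hli : LinearIndependent F2 fam := by
    rw [Fintype.linearIndependent_iff]
    intro g hg i
    have h := congrFun hg (i : T.V)
    simp only [Finset.sum_apply, Pi.smul_apply, Pi.add_apply, Pi.zero_apply, smul_eq_mul,
      hfam, χ] at h
    rw [Finset.sum_eq_single i] at h
    · have hne : ¬ (a₀ = (i : T.V)) := fun hh => i.2 hh.symm
      simpa [hne] using h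
    · intro b _ hb
      have hne1 : ¬ (a₀ = (i : T.V)) := fun hh => i.2 hh.symm
      have hne2 : ¬ ((b : T.V) = (i : T.V)) := fun hh => hb (Subtype.ext hh)
      simp [hne1, hne2]
    · intro hi; exact absurd (Finset.mem_univ i) hi
  have hspan : Submodule.span F2 (Set.range fam) ≤ LinearMap.range (bdry T) := by
    rw [Submodule.span_le]
    rintro _ ⟨b, rfl⟩
    exact reach_mem_range hT.1 a₀ (b : T.V)
  have hsub : Fintype.card {b : T.V // b ≠ a₀} = Fintype.card T.V - 1 := by
    simp [Ne, Fintype.card_subtype_compl, Fintype.card_subtype_eq]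
  have h1 : Fintype.card T.V - 1 ≤ Module.finrank F2 (LinearMap.range (bdry T)) := by
    have hsp := finrank_span_eq_card hli
    calc Fintype.card T.V - 1 = Fintype.card {b : T.V // b ≠ a₀} := hsub.symm
      _ = Module.finrank F2 (Submodule.span F2 (Set.range fam)) := hsp.symm
      _ ≤ Module.finrank F2 (LinearMap.range (bdry T)) := Submodule.finrank_mono hspan
  have h2 := LinearMap.finrank_range_add_finrank_ker (bdry T)
  rw [Module.finrank_fintype_fun_eq_card] at h2
  have hrle : Module.finrank F2 (LinearMap.range (bdry T)) ≤ Fintype.card T.E :=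
    (LinearMap.finrank_range_le _).trans_eq (Module.finrank_fintype_fun_eq_card _)
  have hker : Module.finrank F2 (LinearMap.ker (bdry T)) = 0 := by omega
  rw [← LinearMap.ker_eq_bot]
  exact Submodule.finrank_eq_zero.mp hker

end CycleAux
namespace CycleAux

variable {G T : MGraph} (φ : MGraphMorphism G T)

lemma fiber_card_even (hG2 : ∀ x : G.V, G.valence x = 2) (hT : T.IsTree) (e' : T.E) :
    2 ∣ (Finset.univ.filter fun e => φ.emap e = Sum.inl e').card := by
  set c : T.E → F2 :=
    fun f' => ((Finset.univ.filter fun e => φ.emap e = Sum.inl f').card : F2) with hc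
  have hcf : ∀ f' : T.E,
      c f' = ∑ e : G.E, if φ.emap e = Sum.inl f' then (1 : F2) else 0 := by
    intro f'
    rw [hc]
    simp only [Finset.card_filter]
    push_cast
    rfl
  have hb : bdry T c = 0 := by
    funext v'
    have key : ∀ e : G.E,
        (∑ f' : T.E, (if φ.emap e = Sum.inl f' then (1:F2) else 0)
          * (χ (T.src f') v' + χ (T.tgt f') v'))
          = χ (φ.vmap (G.src e)) v' + χ (φ.vmap (G.tgt e)) v' := by
      intro e
      cases hme : φ.emap e with
      | inl f =>
          rw [Finset.sum_eq_single f]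
          · rcases φ.ends_edge e f hme with ⟨h1, h2⟩ | ⟨h1, h2⟩
            · rw [← h1, ← h2]; simp [hme]
            · rw [← h1, ← h2]; simp [hme, add_comm]
          · intro b _ hbne
            simp [hme, Sum.inl.injEq, Ne.symm hbne]
          · intro h; exact absurd (Finset.mem_univ f) h
      | inr w =>
          obtain ⟨h1, h2⟩ := φ.ends_vert e w hme
          rw [h1, h2]
          rw [Finset.sum_eq_zero (fun f' _ => by simp)]
          exact (CharTwo.add_self_eq_zero _).symm
    calc bdry T c v'
        = ∑ f' : T.E, c f' * (χ (T.src f') v' + χ (T.tgt f') v') := rfl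
      _ = ∑ f' : T.E, ∑ e : G.E, (if φ.emap e = Sum.inl f' then (1:F2) else 0)
            * (χ (T.src f') v' + χ (T.tgt f') v') := by
          refine Finset.sum_congr rfl fun f' _ => ?_
          rw [hcf f', Finset.sum_mul]
      _ = ∑ e : G.E, ∑ f' : T.E, (if φ.emap e = Sum.inl f' then (1:F2) else 0)
            * (χ (T.src f') v' + χ (T.tgt f') v') := Finset.sum_comm
      _ = ∑ e : G.E, (χ (φ.vmap (G.src e)) v' + χ (φ.vmap (G.tgt e)) v') :=
          Finset.sum_congr rfl fun e _ => key e
      _ = ∑ d : G.E × Bool, χ (φ.vmap (cond d.2 (G.src d.1) (G.tgt d.1))) v' := by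
          rw [Fintype.sum_prod_type]
          exact Finset.sum_congr rfl fun e _ => (Fintype.sum_bool fun b => χ (φ.vmap (cond b (G.src e) (G.tgt e))) v').symm
      _ = ∑ x : G.V, ∑ d ∈ G.dartAt x, χ (φ.vmap (cond d.2 (G.src d.1) (G.tgt d.1))) v' :=
          (sum_dartAt G _).symm
      _ = 0 := by
          refine Finset.sum_eq_zero fun x _ => ?_
          rw [Finset.sum_congr rfl (fun d hd => by rw [mem_dartAt.mp hd])]
          rw [Finset.sum_const]
          have : (G.dartAt x).card = 2 := hG2 x
          rw [this, two_smul]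
          exact CharTwo.add_self_eq_zero _
  have hc0 : c = 0 := tree_bdry_inj hT (by rw [hb, map_zero])
  have := congrFun hc0 e'
  rw [hc] at this
  simpa using (ZMod.natCast_eq_zero_iff _ 2).mp this

lemma fiber_card_two (hG2 : ∀ x : G.V, G.valence x = 2) (hT : T.IsTree)
    (hdeg : HasDegree φ 3) (e' : T.E) :
    (Finset.univ.filter fun e => φ.emap e = Sum.inl e').card = 2 := by
  have hev := fiber_card_even φ hG2 hT e'
  have hsum : ∑ e ∈ Finset.univ.filter (fun e => φ.emap e = Sum.inl e'), φ.idx e = 3 := hdeg e'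
  have hle : (Finset.univ.filter fun e => φ.emap e = Sum.inl e').card ≤ 3 := by
    have h1 : ∀ e ∈ Finset.univ.filter (fun e => φ.emap e = Sum.inl e'), 1 ≤ φ.idx e := by
      intro e he
      exact (φ.idx_edge e e' (Finset.mem_filter.mp he).2).1
    calc (Finset.univ.filter fun e => φ.emap e = Sum.inl e').card
        = (Finset.univ.filter fun e => φ.emap e = Sum.inl e').card • 1 := (smul_eq_mul ..).trans (mul_one _) |>.symm
      _ ≤ ∑ e ∈ Finset.univ.filter (fun e => φ.emap e = Sum.inl e'), φ.idx e :=
          Finset.card_nsmul_le_sum _ _ _ h1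
      _ = 3 := hsum
  have hne : (Finset.univ.filter fun e => φ.emap e = Sum.inl e').card ≠ 0 := by
    intro h0
    rw [Finset.card_eq_zero.mp h0] at hsum
    simp at hsum
  omega

lemma idx_le_two (hG2 : ∀ x : G.V, G.valence x = 2) (hT : T.IsTree)
    (hdeg : HasDegree φ 3) (e : G.E) : φ.idx e ≤ 2 := by
  cases hme : φ.emap e with
  | inr w => rw [φ.idx_vert e w hme]; omega
  | inl e' =>
      obtain ⟨a, b, hab, hpair⟩ := Finset.card_eq_two.mp (fiber_card_two φ hG2 hT hdeg e')
      have hsum : ∑ f ∈ Finset.univ.filter (fun f => φ.emap f = Sum.inl e'), φ.idx f = 3 :=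
        hdeg e'
      rw [hpair, Finset.sum_pair hab] at hsum
      have hmem : e ∈ ({a, b} : Finset G.E) := by
        rw [← hpair]; exact Finset.mem_filter.mpr ⟨Finset.mem_univ e, hme⟩
      have hamem : a ∈ Finset.univ.filter (fun f => φ.emap f = Sum.inl e') := by
        rw [hpair]; exact Finset.mem_insert_self a _
      have hbmem : b ∈ Finset.univ.filter (fun f => φ.emap f = Sum.inl e') := by
        rw [hpair]; exact Finset.mem_insert_of_mem (Finset.mem_singleton_self b)
      have ha1 : 1 ≤ φ.idx a := (φ.idx_edge a e' (Finset.mem_filter.mp hamem).2).1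
      have hb1 : 1 ≤ φ.idx b := (φ.idx_edge b e' (Finset.mem_filter.mp hbmem).2).1
      rcases Finset.mem_insert.mp hmem with rfl | hmem2
      · omega
      · rw [Finset.mem_singleton.mp hmem2]; omega

end CycleAux
namespace CycleAux

variable {G T : MGraph} (φ : MGraphMorphism G T)

instance {H : MGraph} (e : H.E) (v : H.V) : Decidable (H.Inc e v) :=
  inferInstanceAs (Decidable (H.src e = v ∨ H.tgt e = v))

/-- every vertex reachable from `a` stays in a trap set. -/
lemma conn_trap {S : Set G.V}
    (hS : ∀ u ∈ S, ∀ f : G.E, G.Inc f u → G.src f ∈ S ∧ G.tgt f ∈ S)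
    {a b : G.V} (hab : Relation.ReflTransGen G.Adj a b) (ha : a ∈ S) : b ∈ S := by
  induction hab with
  | refl => exact ha
  | @tail b c hab hbc ih =>
      obtain ⟨f, hf⟩ := hbc
      rcases hf with ⟨h1, h2⟩ | ⟨h1, h2⟩
      · exact h2 ▸ (hS b ih f (Or.inl h1)).2
      · exact h1 ▸ (hS b ih f (Or.inr h2)).1

lemma no_loops_G (hG2 : ∀ x : G.V, G.valence x = 2) (hconn : G.Conn)
    {u w : G.V} (huw : u ≠ w) : ∀ e : G.E, G.src e ≠ G.tgt e := by
  intro e he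
  set v := G.src e with hv
  have h1 : (e, true) ∈ G.dartAt v := mem_dartAt.mpr rfl
  have h2 : (e, false) ∈ G.dartAt v := mem_dartAt.mpr he.symm
  have hsub : ({(e, true), (e, false)} : Finset (G.E × Bool)) ⊆ G.dartAt v := by
    intro d hd
    rcases Finset.mem_insert.mp hd with rfl | hd
    · exact h1
    · rw [Finset.mem_singleton.mp hd]; exact h2
  have hcards : ({(e, true), (e, false)} : Finset (G.E × Bool)).card = 2 := by
    rw [Finset.card_insert_of_notMem (by simp), Finset.card_singleton]
  have heq : ({(e, true), (e, false)} : Finset (G.E × Bool)) = G.dartAt v :=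
    Finset.eq_of_subset_of_card_le hsub (by have hv2 : (G.dartAt v).card = 2 := hG2 v; rw [hv2, hcards])
  have htrap : ∀ u' ∈ ({v} : Set G.V), ∀ f : G.E, G.Inc f u' → G.src f ∈ ({v} : Set G.V) ∧ G.tgt f ∈ ({v} : Set G.V) := by
    intro u' hu' f hf
    have hu'v : u' = v := hu'
    have hfe : f = e := by
      rcases hf with h | h
      · have : (f, true) ∈ G.dartAt v := mem_dartAt.mpr (by simpa [hu'v] using h)
        rw [← heq] at this
        rcases Finset.mem_insert.mp this with h' | h'
        · exact (Prod.ext_iff.mp h').1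
        · exact (Prod.ext_iff.mp (Finset.mem_singleton.mp h')).1
      · have : (f, false) ∈ G.dartAt v := mem_dartAt.mpr (by simpa [hu'v] using h)
        rw [← heq] at this
        rcases Finset.mem_insert.mp this with h' | h'
        · exact absurd (Prod.ext_iff.mp h').2 (by simp)
        · exact (Prod.ext_iff.mp (Finset.mem_singleton.mp h')).1
    subst hfe
    exact ⟨rfl, he.symm⟩
  have hu : u ∈ ({v} : Set G.V) ∨ u ∉ ({v} : Set G.V) := em _
  rcases hu with hu | hu
  · have := conn_trap htrap (hconn v w) (rfl : v ∈ ({v} : Set G.V))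
    have hwv : w = v := this
    have huv : u = v := hu
    exact huw (huv.trans hwv.symm)
  · have := conn_trap htrap (hconn v u) (rfl : v ∈ ({v} : Set G.V))
    exact hu this

lemma darts_edge_ne (hnl : ∀ e : G.E, G.src e ≠ G.tgt e) {x : G.V}
    {d₁ d₂ : G.E × Bool} (h1 : d₁ ∈ G.dartAt x) (h2 : d₂ ∈ G.dartAt x)
    (hne : d₁ ≠ d₂) : d₁.1 ≠ d₂.1 := by
  intro heq
  obtain ⟨e₁, b₁⟩ := d₁
  obtain ⟨e₂, b₂⟩ := d₂
  simp only at heq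
  subst heq
  have hb : b₁ ≠ b₂ := fun hb => hne (by rw [hb])
  have h1' := mem_dartAt.mp h1
  have h2' := mem_dartAt.mp h2
  cases b₁ <;> cases b₂ <;> simp_all
  · exact hnl e₁ ((h1'.trans h2'.symm)).symm
  · exact hnl e₁ ((h2'.trans h1'.symm)).symm

lemma localSum_pos (hharm : Harmonic φ) (hnd : NonDegenerate φ) (x : G.V) :
    ∀ e' : T.E, T.Inc e' (φ.vmap x) → 0 < localSum φ x e' := by
  obtain ⟨d, hd, hdpos⟩ := hnd x
  cases hme : φ.emap d.1 with
  | inr w => rw [φ.idx_vert d.1 w hme] at hdpos; omega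
  | inl e'' =>
      have hx : G.src d.1 = x ∨ G.tgt d.1 = x := by
        have hb := mem_dartAt.mp hd
        cases hd2 : d.2 <;> rw [hd2] at hb <;>
          simp only [Bool.cond_false, Bool.cond_true] at hb
        · exact Or.inr hb
        · exact Or.inl hb
      have hinc : T.Inc e'' (φ.vmap x) := by
        rcases φ.ends_edge d.1 e'' hme with ⟨ha, hb'⟩ | ⟨ha, hb'⟩ <;> rcases hx with h | h
        · exact Or.inl (by rw [← ha, h])
        · exact Or.inr (by rw [← hb', h])
        · exact Or.inr (by rw [← ha, h])
        · exact Or.inl (by rw [← hb', h])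
      have hpos'' : 0 < localSum φ x e'' := by
        apply Finset.sum_pos' (fun i _ => Nat.zero_le _)
        exact ⟨d, hd, by rw [if_pos hme]; omega⟩
      intro e' he'
      rw [hharm x e' e'' he' hinc]
      exact hpos''

/-- A vertex of `T` has at most 2 incident edges. -/
lemma inc_card_le_two (hG2 : ∀ x : G.V, G.valence x = 2) (hharm : Harmonic φ)
    (hnd : NonDegenerate φ) (hdeg : HasDegree φ 3) (v : T.V) :
    (Finset.univ.filter fun e' => T.Inc e' v).card ≤ 2 := by
  rcases Finset.eq_empty_or_nonempty (Finset.univ.filter fun e' => T.Inc e' v) with h | ⟨e', he'⟩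
  · rw [h]; simp
  · have hinc : T.Inc e' v := (Finset.mem_filter.mp he').2
    -- find a preimage vertex of v
    have hne3 : (3:ℕ) ≠ 0 := by omega
    obtain ⟨e, hemem, -⟩ :=
      Finset.exists_ne_zero_of_sum_ne_zero
        (show (∑ f ∈ Finset.univ.filter (fun f => φ.emap f = Sum.inl e'), φ.idx f) ≠ 0 by
          show fiberDeg φ e' ≠ 0
          rw [hdeg e']
          omega)
    have hme : φ.emap e = Sum.inl e' := (Finset.mem_filter.mp hemem).2
    have hx : ∃ x : G.V, φ.vmap x = v := by
      rcases φ.ends_edge e e' hme with ⟨ha, hb⟩ | ⟨ha, hb⟩ <;> rcases hinc with h | h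
      · exact ⟨G.src e, ha.trans h⟩
      · exact ⟨G.tgt e, hb.trans h⟩
      · exact ⟨G.tgt e, hb.trans h⟩
      · exact ⟨G.src e, ha.trans h⟩
    obtain ⟨x, hxv⟩ := hx
    have hpos : ∀ f' : T.E, T.Inc f' v → 0 < localSum φ x f' := by
      intro f' hf'
      exact localSum_pos φ hharm hnd x f' (by rw [hxv]; exact hf')
    obtain ⟨d₀, hd₀, -⟩ := hnd x
    have hch : ∀ f' : T.E, ∃ d : G.E × Bool,
        T.Inc f' v → d ∈ G.dartAt x ∧ φ.emap d.1 = Sum.inl f' := by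
      intro f'
      by_cases hf : T.Inc f' v
      · have h0 : localSum φ x f' ≠ 0 := Nat.pos_iff_ne_zero.mp (hpos f' hf)
        obtain ⟨d, hd, hdne⟩ := Finset.exists_ne_zero_of_sum_ne_zero h0
        refine ⟨d, fun _ => ⟨hd, ?_⟩⟩
        by_contra hcon
        rw [if_neg hcon] at hdne
        exact hdne rfl
      · exact ⟨d₀, fun h => absurd h hf⟩
    choose fd hfd using hch
    calc (Finset.univ.filter fun e' => T.Inc e' v).card
        ≤ (G.dartAt x).card := by
          apply Finset.card_le_card_of_injOn fd
          · intro f' hf'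
            exact (hfd f' (Finset.mem_filter.mp hf').2).1
          · intro i₁ hi₁ i₂ hi₂ heq
            have h1 := (hfd i₁ (Finset.mem_filter.mp hi₁).2).2
            have h2 := (hfd i₂ (Finset.mem_filter.mp hi₂).2).2
            rw [heq] at h1
            rw [h1] at h2
            exact Sum.inl.inj h2
      _ = 2 := hG2 x

end CycleAux
namespace CycleAux

variable {G T : MGraph} (φ : MGraphMorphism G T)

lemma mem_dartAt_end {x : G.V} {d : G.E × Bool} (hd : d ∈ G.dartAt x) :
    G.src d.1 = x ∨ G.tgt d.1 = x := by
  have hb := mem_dartAt.mp hd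
  cases hd2 : d.2 <;> rw [hd2] at hb <;>
    simp only [Bool.cond_false, Bool.cond_true] at hb
  · exact Or.inr hb
  · exact Or.inl hb

lemma localSum_pair {x : G.V} {d₁ d₂ : G.E × Bool} (hne : d₁ ≠ d₂)
    (hpair : G.dartAt x = {d₁, d₂}) (e' : T.E) :
    localSum φ x e' = (if φ.emap d₁.1 = Sum.inl e' then φ.idx d₁.1 else 0)
      + (if φ.emap d₂.1 = Sum.inl e' then φ.idx d₂.1 else 0) := by
  unfold localSum
  rw [hpair, Finset.sum_pair hne]

/-- at a point of multiplicity 3, the image vertex has a unique incident edge -/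
lemma ram_unique_inc (hG2 : ∀ x : G.V, G.valence x = 2) (hT : T.IsTree)
    (hdeg : HasDegree φ 3) {x : G.V}
    (hm : ∀ e', T.Inc e' (φ.vmap x) → localSum φ x e' = 3)
    {e₁' e₂' : T.E} (h1 : T.Inc e₁' (φ.vmap x)) (h2 : T.Inc e₂' (φ.vmap x)) :
    e₁' = e₂' := by
  by_contra hne'
  obtain ⟨d₁, d₂, hd12, hpair⟩ := Finset.card_eq_two.mp (hG2 x)
  have key : ∀ d : G.E × Bool,
      (if φ.emap d.1 = Sum.inl e₁' then φ.idx d.1 else 0)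
        + (if φ.emap d.1 = Sum.inl e₂' then φ.idx d.1 else 0) ≤ φ.idx d.1 := by
    intro d
    split_ifs with hc1 hc2 hc2
    · exact absurd (Sum.inl.inj (hc1.symm.trans hc2)) hne'
    · omega
    · omega
    · omega
  have hb1 : φ.idx d₁.1 ≤ 2 := idx_le_two φ hG2 hT hdeg d₁.1
  have hb2 : φ.idx d₂.1 ≤ 2 := idx_le_two φ hG2 hT hdeg d₂.1
  have hs1 := hm e₁' h1
  have hs2 := hm e₂' h2
  rw [localSum_pair φ hd12 hpair] at hs1 hs2
  have k1 := key d₁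
  have k2 := key d₂
  omega

/-- at a point of multiplicity 3, both darts map onto the incident edge -/
lemma ram_darts (hG2 : ∀ x : G.V, G.valence x = 2) (hT : T.IsTree)
    (hdeg : HasDegree φ 3) {x : G.V} {d₁ d₂ : G.E × Bool} (hne : d₁ ≠ d₂)
    (hpair : G.dartAt x = {d₁, d₂}) {e' : T.E} (hinc : T.Inc e' (φ.vmap x))
    (hm : ∀ f', T.Inc f' (φ.vmap x) → localSum φ x f' = 3) :
    φ.emap d₁.1 = Sum.inl e' ∧ φ.emap d₂.1 = Sum.inl e'
      ∧ φ.idx d₁.1 + φ.idx d₂.1 = 3 := by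
  have h3 := hm e' hinc
  rw [localSum_pair φ hne hpair] at h3
  have hb1 : φ.idx d₁.1 ≤ 2 := idx_le_two φ hG2 hT hdeg d₁.1
  have hb2 : φ.idx d₂.1 ≤ 2 := idx_le_two φ hG2 hT hdeg d₂.1
  by_cases hc1 : φ.emap d₁.1 = Sum.inl e'
  · by_cases hc2 : φ.emap d₂.1 = Sum.inl e'
    · rw [if_pos hc1, if_pos hc2] at h3
      exact ⟨hc1, hc2, h3⟩
    · rw [if_pos hc1, if_neg hc2] at h3
      omega
  · rw [if_neg hc1] at h3
    by_cases hc2 : φ.emap d₂.1 = Sum.inl e'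
    · rw [if_pos hc2] at h3; omega
    · rw [if_neg hc2] at h3; omega

lemma images_distinct (hG : G.IsCycleGraph) (hT : T.IsTree) (hdeg : HasDegree φ 3)
    {x y z : G.V} (hxy : x ≠ y) (hxz : x ≠ z) (hyz : y ≠ z)
    (hmx : HasMult φ x 3) (hmy : HasMult φ y 3) : φ.vmap x ≠ φ.vmap y := by
  intro hv
  obtain ⟨⟨e', hinc⟩, hx3⟩ := hmx
  obtain ⟨-, hy3⟩ := hmy
  have hnl : ∀ e : G.E, G.src e ≠ G.tgt e := no_loops_G hG.2 hG.1 hxy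
  obtain ⟨d₁, d₂, hd12, hdx⟩ := Finset.card_eq_two.mp (hG.2 x)
  obtain ⟨c₁, c₂, hc12, hdy⟩ := Finset.card_eq_two.mp (hG.2 y)
  have hd₁mem : d₁ ∈ G.dartAt x := by rw [hdx]; exact Finset.mem_insert_self _ _
  have hd₂mem : d₂ ∈ G.dartAt x := by
    rw [hdx]; exact Finset.mem_insert_of_mem (Finset.mem_singleton_self _)
  have hc₁mem : c₁ ∈ G.dartAt y := by rw [hdy]; exact Finset.mem_insert_self _ _
  have hc₂mem : c₂ ∈ G.dartAt y := by
    rw [hdy]; exact Finset.mem_insert_of_mem (Finset.mem_singleton_self _)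
  have hincy : T.Inc e' (φ.vmap y) := by rw [← hv]; exact hinc
  obtain ⟨hm1, hm2, hi12⟩ := ram_darts φ hG.2 hT hdeg hd12 hdx hinc hx3
  obtain ⟨hm1', hm2', hi12'⟩ := ram_darts φ hG.2 hT hdeg hc12 hdy hincy hy3
  have hd1ne : d₁.1 ≠ d₂.1 := darts_edge_ne hnl hd₁mem hd₂mem hd12
  have hc1ne : c₁.1 ≠ c₂.1 := darts_edge_ne hnl hc₁mem hc₂mem hc12
  -- the fiber over e' equals both edge pairs
  have hfib2 := fiber_card_two φ hG.2 hT hdeg e'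
  have hfx : Finset.univ.filter (fun e => φ.emap e = Sum.inl e') = {d₁.1, d₂.1} := by
    refine (Finset.eq_of_subset_of_card_le ?_ ?_).symm
    · intro f hf
      rcases Finset.mem_insert.mp hf with rfl | hf
      · exact Finset.mem_filter.mpr ⟨Finset.mem_univ _, hm1⟩
      · rw [Finset.mem_singleton.mp hf]
        exact Finset.mem_filter.mpr ⟨Finset.mem_univ _, hm2⟩
    · rw [hfib2, Finset.card_insert_of_notMem (by simpa using hd1ne),
        Finset.card_singleton]
  have hfy : Finset.univ.filter (fun e => φ.emap e = Sum.inl e') = {c₁.1, c₂.1} := by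
    refine (Finset.eq_of_subset_of_card_le ?_ ?_).symm
    · intro f hf
      rcases Finset.mem_insert.mp hf with rfl | hf
      · exact Finset.mem_filter.mpr ⟨Finset.mem_univ _, hm1'⟩
      · rw [Finset.mem_singleton.mp hf]
        exact Finset.mem_filter.mpr ⟨Finset.mem_univ _, hm2'⟩
    · rw [hfib2, Finset.card_insert_of_notMem (by simpa using hc1ne),
        Finset.card_singleton]
  have hEq : ({c₁.1, c₂.1} : Finset G.E) = {d₁.1, d₂.1} := by rw [← hfx, ← hfy]
  -- both edges have one end at x and one end at y
  have hends : ∀ f : G.E, (f = d₁.1 ∨ f = d₂.1) →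
      G.src f ∈ ({x, y} : Set G.V) ∧ G.tgt f ∈ ({x, y} : Set G.V) := by
    intro f hf
    have hfx1 : G.src f = x ∨ G.tgt f = x := by
      rcases hf with rfl | rfl
      · exact mem_dartAt_end hd₁mem
      · exact mem_dartAt_end hd₂mem
    have hfy1 : G.src f = y ∨ G.tgt f = y := by
      have hfc : f = c₁.1 ∨ f = c₂.1 := by
        have : f ∈ ({c₁.1, c₂.1} : Finset G.E) := by
          rw [hEq]
          rcases hf with rfl | rfl
          · exact Finset.mem_insert_self _ _
          · exact Finset.mem_insert_of_mem (Finset.mem_singleton_self _)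
        simpa using this
      rcases hfc with rfl | rfl
      · exact mem_dartAt_end hc₁mem
      · exact mem_dartAt_end hc₂mem
    rcases hfx1 with hsx | htx <;> rcases hfy1 with hsy | hty
    · exact absurd (hsx.symm.trans hsy) hxy
    · exact ⟨Or.inl hsx, Or.inr hty⟩
    · exact ⟨Or.inr hsy, Or.inl htx⟩
    · exact absurd (htx.symm.trans hty) hxy
  -- the trap
  have htrap : ∀ u ∈ ({x, y} : Set G.V), ∀ f : G.E, G.Inc f u →
      G.src f ∈ ({x, y} : Set G.V) ∧ G.tgt f ∈ ({x, y} : Set G.V) := by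
    intro u hu f hf
    have hdart : ∃ b : Bool, (f, b) ∈ G.dartAt u := by
      rcases hf with h | h
      · exact ⟨true, mem_dartAt.mpr h⟩
      · exact ⟨false, mem_dartAt.mpr h⟩
    obtain ⟨b, hb⟩ := hdart
    have hfmem : f = d₁.1 ∨ f = d₂.1 := by
      rcases hu with rfl | hu
      · rw [hdx] at hb
        rcases Finset.mem_insert.mp hb with h | h
        · exact Or.inl (congrArg Prod.fst h)
        · exact Or.inr (congrArg Prod.fst (Finset.mem_singleton.mp h))
      · have hu' : u = y := hu
        subst hu'
        rw [hdy] at hb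
        have : f = c₁.1 ∨ f = c₂.1 := by
          rcases Finset.mem_insert.mp hb with h | h
          · exact Or.inl (congrArg Prod.fst h)
          · exact Or.inr (congrArg Prod.fst (Finset.mem_singleton.mp h))
        have : f ∈ ({c₁.1, c₂.1} : Finset G.E) := by simpa using this
        rw [hEq] at this
        simpa using this
    exact hends f hfmem
  have hz : z ∈ ({x, y} : Set G.V) :=
    conn_trap htrap (hG.1 x z) (Or.inl rfl)
  rcases hz with h | h
  · exact hxz h.symm
  · exact hyz (Set.mem_singleton_iff.mp h).symm

end CycleAux

/-- If `G` is a cycle and `φ : (G,l) → (T,l_T)` is a non-degenerate harmonic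
morphism of degree `3` to a metric tree, then there are no three distinct
vertices of `G` all of local multiplicity `3`. -/
theorem stmt_0 (G T : MGraph) (hG : G.IsCycleGraph) (hT : T.IsTree)
    (φ : MGraphMorphism G T) (hharm : Harmonic φ) (hdeg : HasDegree φ 3)
    (hnd : NonDegenerate φ) :
    ¬ ∃ x₁ x₂ x₃ : G.V, x₁ ≠ x₂ ∧ x₁ ≠ x₃ ∧ x₂ ≠ x₃ ∧
      HasMult φ x₁ 3 ∧ HasMult φ x₂ 3 ∧ HasMult φ x₃ 3 := by
  open CycleAux in
  rintro ⟨x₁, x₂, x₃, h12, h13, h23, hm1, hm2, hm3⟩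
  classical
  have hval := hG.2
  -- distinctness of the three images
  have hv12 : φ.vmap x₁ ≠ φ.vmap x₂ :=
    images_distinct φ hG hT hdeg h12 h13 h23 hm1 hm2
  have hv13 : φ.vmap x₁ ≠ φ.vmap x₃ :=
    images_distinct φ hG hT hdeg h13 h12 h23.symm hm1 hm3
  have hv23 : φ.vmap x₂ ≠ φ.vmap x₃ :=
    images_distinct φ hG hT hdeg h23 h12.symm h13.symm hm2 hm3
  -- each image has at most one incident edge
  have hv1le : ∀ x : G.V, HasMult φ x 3 →
      (Finset.univ.filter fun e' => T.Inc e' (φ.vmap x)).card ≤ 1 := by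
    intro x hm
    apply Finset.card_le_one.mpr
    intro a ha b hb
    exact ram_unique_inc φ hval hT hdeg hm.2
      (Finset.mem_filter.mp ha).2 (Finset.mem_filter.mp hb).2
  -- T has no loops
  have hnlT : ∀ e : T.E, T.src e ≠ T.tgt e := by
    intro e he
    have : bdry T (ed T e) = bdry T 0 := by
      rw [map_zero, bdry_ed, ← he, chi_add_self]
    have h0 := tree_bdry_inj hT this
    have h1 : (if e = e then (1 : F2) else 0) = 0 := congrFun h0 e
    rw [if_pos rfl] at h1
    exact absurd h1 (by decide)
  -- handshake in T
  have hsum : ∑ v : T.V, (Finset.univ.filter fun e' => T.Inc e' v).card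
      = 2 * Fintype.card T.E := by
    calc ∑ v : T.V, (Finset.univ.filter fun e' => T.Inc e' v).card
        = ∑ v : T.V, ∑ e' : T.E, if T.Inc e' v then 1 else 0 :=
          Finset.sum_congr rfl fun v _ => Finset.card_filter _ _
      _ = ∑ e' : T.E, ∑ v : T.V, if T.Inc e' v then 1 else 0 := Finset.sum_comm
      _ = ∑ e' : T.E, 2 := by
          refine Finset.sum_congr rfl fun e' _ => ?_
          rw [← Finset.card_filter]
          have hset : Finset.univ.filter (fun v => T.Inc e' v)
              = {T.src e', T.tgt e'} := by
            ext v
            simp [MGraph.Inc, eq_comm]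
          rw [hset, Finset.card_insert_of_notMem (by simpa using hnlT e'),
            Finset.card_singleton]
      _ = 2 * Fintype.card T.E := by
          rw [Finset.sum_const, Finset.card_univ, smul_eq_mul, mul_comm]
  -- the three images as a finset
  set s : Finset T.V := {φ.vmap x₁, φ.vmap x₂, φ.vmap x₃} with hs
  have hcard_s : s.card = 3 := by
    rw [hs, Finset.card_insert_of_notMem (by simp [hv12, hv13]),
      Finset.card_insert_of_notMem (by simpa using hv23), Finset.card_singleton]
  have hsplit := Finset.sum_filter_add_sum_filter_not Finset.univ (· ∈ s)
    (fun v => (Finset.univ.filter fun e' => T.Inc e' v).card)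
  have hfilter_in : Finset.univ.filter (· ∈ s) = s := by
    ext v; simp
  have h_in : ∑ v ∈ Finset.univ.filter (· ∈ s),
      (Finset.univ.filter fun e' => T.Inc e' v).card ≤ 3 := by
    rw [hfilter_in]
    calc ∑ v ∈ s, (Finset.univ.filter fun e' => T.Inc e' v).card
        ≤ s.card • 1 := by
          apply Finset.sum_le_card_nsmul
          intro v hv
          rw [hs] at hv
          rcases Finset.mem_insert.mp hv with rfl | hv
          · exact hv1le x₁ hm1
          · rcases Finset.mem_insert.mp hv with rfl | hv
            · exact hv1le x₂ hm2
            · rw [Finset.mem_singleton.mp hv]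
              exact hv1le x₃ hm3
      _ = 3 := by rw [hcard_s]; simp
  have h_out : ∑ v ∈ Finset.univ.filter (· ∉ s),
      (Finset.univ.filter fun e' => T.Inc e' v).card
        ≤ (Fintype.card T.V - 3) * 2 := by
    have hfo : Finset.univ.filter (· ∉ s) = Finset.univ \ s := by
      ext v; simp
    calc ∑ v ∈ Finset.univ.filter (· ∉ s),
        (Finset.univ.filter fun e' => T.Inc e' v).card
        ≤ (Finset.univ.filter (· ∉ s)).card • 2 :=
          Finset.sum_le_card_nsmul _ _ 2
            (fun v _ => inc_card_le_two φ hval hharm hnd hdeg v)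
      _ = (Fintype.card T.V - 3) * 2 := by
          rw [hfo, Finset.card_sdiff_of_subset (Finset.subset_univ s), Finset.card_univ,
            hcard_s, smul_eq_mul]
  have hVge : 3 ≤ Fintype.card T.V := by
    calc 3 = s.card := hcard_s.symm
      _ ≤ Fintype.card T.V := by
        rw [← Finset.card_univ]; exact Finset.card_le_univ s
  have hTE := hT.2
  omega
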